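/- Let p be a prime number and let H be a closed subgroup of the unit group ℤ_p^× of the ring of p-adic integers (a topological group for the topology induced from ℤ_p). If H is infinite, then there exists a finite group Δ such that H is isomorphic, as a topological group, to the direct product ℤ_p × Δ, where ℤ_p carries its additive group structure and its p-adic (profinite) topology. -/

import Mathlib

set_option linter.unusedSectionVars false

open Filter Topology

namespace ZpAux

variable {p : ℕ} [hp : Fact p.Prime]

lemma one_lt_p : (1:ℝ) < (p:ℝ) := by exact_mod_cast hp.out.one_lt

lemma pinv_pos : (0:ℝ) < (p:ℝ)⁻¹ := by
  have := one_lt_p (p := p); positivity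

lemma pinv_lt_one : (p:ℝ)⁻¹ < 1 := by
  rw [inv_lt_one_iff₀]; right; exact one_lt_p

/-- The "goodness" condition on `x` ensuring `‖(1+x)^m - 1‖ = ‖m‖‖x‖`. -/
def Good (z : ℤ_[p]) : Prop := ‖z‖ ≤ (p:ℝ)⁻¹ ∧ ‖z‖^(p-1) ≤ ((p:ℝ)⁻¹)^2

lemma good_mono {z w : ℤ_[p]} (h : ‖w‖ ≤ ‖z‖) (hz : Good z) : Good w := by
  refine ⟨le_trans h hz.1, le_trans ?_ hz.2⟩
  exact pow_le_pow_left₀ (norm_nonneg _) h _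

lemma good_of_le_sq {z : ℤ_[p]} (h : ‖z‖ ≤ ((p:ℝ)⁻¹)^2) : Good z := by
  have h1 : ((p:ℝ)⁻¹)^2 ≤ (p:ℝ)⁻¹ := by
    nlinarith [pinv_pos (p := p), pinv_lt_one (p := p)]
  refine ⟨le_trans h h1, ?_⟩
  have hp1 : 1 ≤ p - 1 := by have := hp.out.two_le; omega
  calc ‖z‖^(p-1) ≤ ‖z‖^1 := by
        apply pow_le_pow_of_le_one (norm_nonneg _) (le_trans h (h1.trans pinv_lt_one.le)) hp1
    _ = ‖z‖ := pow_one _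
    _ ≤ _ := h
lemma good_of_odd {z : ℤ_[p]} (hodd : p ≠ 2) (h : ‖z‖ ≤ (p:ℝ)⁻¹) : Good z := by
  refine ⟨h, ?_⟩
  have h2 : 2 ≤ p - 1 := by have := hp.out.two_le; rcases Nat.lt_or_ge p 3 with h3 | h3; · omega
                            · omega
  calc ‖z‖^(p-1) ≤ ((p:ℝ)⁻¹)^(p-1) := pow_le_pow_left₀ (norm_nonneg _) h _
    _ ≤ ((p:ℝ)⁻¹)^2 := pow_le_pow_of_le_one pinv_pos.le pinv_lt_one.le h2

lemma good_zero : Good (0 : ℤ_[p]) := good_of_le_sq (by rw [norm_zero]; positivity)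

/-- binomial expansion skeleton -/
lemma one_add_pow (x : ℤ_[p]) (m : ℕ) :
    ∃ S : ℤ_[p], (1+x)^m = 1 + m*x + x^2*S := by
  induction m with
  | zero => exact ⟨0, by ring⟩
  | succ n ih =>
    obtain ⟨S, hS⟩ := ih
    refine ⟨S + n + x*S, ?_⟩
    rw [pow_succ, hS]; push_cast; ring

lemma norm_nat_le_one (m : ℕ) : ‖(m : ℤ_[p])‖ ≤ 1 := PadicInt.norm_le_one _

lemma norm_nat_eq_one_of_not_dvd {m : ℕ} (hm : ¬ p ∣ m) : ‖(m : ℤ_[p])‖ = 1 := by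
  refine le_antisymm (norm_nat_le_one m) ?_
  by_contra h
  push_neg at h
  have : ‖((m:ℤ) : ℤ_[p])‖ < 1 := by rwa [Int.cast_natCast]
  rw [PadicInt.norm_int_lt_one_iff_dvd] at this
  exact hm (by exact_mod_cast this)

lemma norm_nat_le_pinv_of_dvd {m : ℕ} (hm : p ∣ m) : ‖(m : ℤ_[p])‖ ≤ (p:ℝ)⁻¹ := by
  have : ‖((m:ℤ) : ℤ_[p])‖ ≤ (p:ℝ)^(-(1:ℕ):ℤ) := by
    rw [PadicInt.norm_int_le_pow_iff_dvd]
    rw [pow_one]; exact_mod_cast hm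
  simpa using this

/-- coprime-exponent case -/
lemma norm_pow_sub_one_coprime {x : ℤ_[p]} (hx : ‖x‖ ≤ (p:ℝ)⁻¹) {m : ℕ} (hm : ¬ p ∣ m) :
    ‖(1+x)^m - 1‖ = ‖x‖ := by
  obtain ⟨S, hS⟩ := one_add_pow x m
  have key : (1+x)^m - 1 = x * (m + x*S) := by rw [hS]; ring
  rw [key, norm_mul]
  rcases eq_or_ne x 0 with rfl | hx0
  · simp
  have h1 : ‖(m:ℤ_[p])‖ = 1 := norm_nat_eq_one_of_not_dvd hm
  have h2 : ‖x*S‖ < 1 := by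
    calc ‖x*S‖ ≤ ‖x‖*1 := by rw [norm_mul]; exact mul_le_mul_of_nonneg_left (PadicInt.norm_le_one _) (norm_nonneg _)
      _ < 1 := by rw [mul_one]; exact lt_of_le_of_lt hx pinv_lt_one
  have : ‖(m:ℤ_[p]) + x*S‖ = 1 := by
    rw [PadicInt.norm_add_eq_max_of_ne (by rw [h1]; exact ne_of_gt h2), h1]
    exact max_eq_left h2.le
  rw [this, mul_one]

/-- The p-th power step. -/
lemma norm_pow_p_sub_one {x : ℤ_[p]} (hx : Good x) :
    ‖(1+x)^p - 1‖ = (p:ℝ)⁻¹ * ‖x‖ := by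
  rcases eq_or_ne x 0 with rfl | hx0
  · simp
  have hxpos : (0:ℝ) < ‖x‖ := norm_pos_iff.mpr hx0
  have hp2 : 2 ≤ p := hp.out.two_le
  -- expansion
  have expand : (1+x)^p - 1 - p*x = ∑ k ∈ Finset.Ico 2 (p+1), x^k * (p.choose k : ℤ_[p]) := by
    have h := add_pow x (1:ℤ_[p]) p
    rw [add_comm x (1:ℤ_[p])] at h
    simp only [one_pow, mul_one] at h
    rw [h, Finset.range_eq_Ico,
        Finset.sum_eq_sum_Ico_succ_bot (by omega) _,
        Finset.sum_eq_sum_Ico_succ_bot (by omega : 1 < p+1) _]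
    simp only [pow_zero, pow_one, Nat.choose_zero_right, Nat.choose_one_right,
      Nat.cast_one, one_mul]
    push_cast
    ring
  -- bound the tail
  have tail_bound : ‖(1+x)^p - 1 - p*x‖ ≤ (p:ℝ)⁻¹ * ‖x‖ * (p:ℝ)⁻¹ := by
    rw [expand]
    apply IsUltrametricDist.norm_sum_le_of_forall_le_of_nonneg
    · positivity
    · intro k hk
      simp only [Finset.mem_Ico] at hk
      rw [norm_mul]
      rcases eq_or_lt_of_le (Nat.lt_succ_iff.mp hk.2) with hkp | hkp
      · -- k = p
        rw [hkp]
        have h1 : ‖x^p‖ = ‖x‖^p := norm_pow x p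
        have hcp : ((p.choose p : ℕ) : ℤ_[p]) = 1 := by simp
        rw [hcp, norm_one, mul_one, h1]
        have : ‖x‖^p = ‖x‖^(p-1) * ‖x‖ := by
          rw [← pow_succ]; congr 1; omega
        rw [this]
        calc ‖x‖^(p-1) * ‖x‖ ≤ ((p:ℝ)⁻¹)^2 * ‖x‖ :=
              mul_le_mul_of_nonneg_right hx.2 (norm_nonneg _)
          _ = (p:ℝ)⁻¹ * ‖x‖ * (p:ℝ)⁻¹ := by ring
      · -- 2 ≤ k < p : p ∣ choose
        have hdvd : p ∣ p.choose k := hp.out.dvd_choose_self (by omega) hkp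
        have h1 : ‖(p.choose k : ℤ_[p])‖ ≤ (p:ℝ)⁻¹ := norm_nat_le_pinv_of_dvd hdvd
        have h2 : ‖x^k‖ ≤ ‖x‖ * (p:ℝ)⁻¹ := by
          rw [norm_pow]
          calc ‖x‖^k ≤ ‖x‖^2 := by
                apply pow_le_pow_of_le_one (norm_nonneg _) (hx.1.trans pinv_lt_one.le) hk.1
            _ = ‖x‖ * ‖x‖ := sq ‖x‖
            _ ≤ ‖x‖ * (p:ℝ)⁻¹ := mul_le_mul_of_nonneg_left hx.1 (norm_nonneg _)
        calc ‖x^k‖ * ‖(p.choose k : ℤ_[p])‖ ≤ (‖x‖ * (p:ℝ)⁻¹) * (p:ℝ)⁻¹ := by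
              apply mul_le_mul h2 h1 (norm_nonneg _) (by positivity)
          _ = (p:ℝ)⁻¹ * ‖x‖ * (p:ℝ)⁻¹ := by ring
  -- conclude by ultrametric
  have hpx : ‖(p:ℤ_[p]) * x‖ = (p:ℝ)⁻¹ * ‖x‖ := by
    rw [norm_mul, PadicInt.norm_p]
  have hlt : ‖(1+x)^p - 1 - p*x‖ < ‖(p:ℤ_[p])*x‖ := by
    rw [hpx]
    calc ‖(1+x)^p - 1 - p*x‖ ≤ (p:ℝ)⁻¹ * ‖x‖ * (p:ℝ)⁻¹ := tail_bound
      _ < (p:ℝ)⁻¹ * ‖x‖ * 1 := by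
          apply mul_lt_mul_of_pos_left pinv_lt_one (by positivity)
      _ = (p:ℝ)⁻¹ * ‖x‖ := by ring
  have : (1+x)^p - 1 = ((1+x)^p - 1 - p*x) + p*x := by ring
  rw [this, ← hpx]
  rcases eq_or_ne (‖(1+x)^p - 1 - p*x‖) (‖(p:ℤ_[p])*x‖) with he | hne
  · exact absurd he hlt.ne
  · rw [PadicInt.norm_add_eq_max_of_ne hne]
    exact max_eq_right hlt.le

lemma norm_pow_pow_sub_one {x : ℤ_[p]} (hx : Good x) :
    Good ((1+x)^p - 1) := by
  apply good_mono _ hx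
  rw [norm_pow_p_sub_one hx]
  calc (p:ℝ)⁻¹ * ‖x‖ ≤ 1 * ‖x‖ :=
        mul_le_mul_of_nonneg_right pinv_lt_one.le (norm_nonneg _)
    _ = ‖x‖ := one_mul _

/-- The key norm formula. -/
lemma norm_pow_sub_one (m : ℕ) : ∀ {x : ℤ_[p]}, Good x →
    ‖(1+x)^m - 1‖ = ‖(m : ℤ_[p])‖ * ‖x‖ := by
  induction m using Nat.strong_induction_on with
  | _ m ih =>
  intro x hx
  rcases eq_or_ne m 0 with rfl | hm0
  · simp
  by_cases hdvd : p ∣ m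
  · obtain ⟨m', rfl⟩ := hdvd
    have hm'0 : 0 < m' := Nat.pos_of_ne_zero (fun h => hm0 (by simp [h]))
    have hm' : m' < p * m' := by nlinarith [hp.out.two_le]
    have key : (1+x)^(p*m') = (1 + ((1+x)^p - 1))^m' := by
      rw [pow_mul]; ring_nf
    rw [key, ih m' hm' (norm_pow_pow_sub_one hx), norm_pow_p_sub_one hx]
    have : ((p*m' : ℕ) : ℤ_[p]) = (p:ℤ_[p]) * (m' : ℤ_[p]) := by push_cast; ring
    rw [this, norm_mul, PadicInt.norm_p]
    ring
  · rw [norm_pow_sub_one_coprime hx.1 hdvd, norm_nat_eq_one_of_not_dvd hdvd, one_mul]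

lemma pow_neg_eq (k : ℕ) : (p:ℝ)^(-(k:ℤ)) = ((p:ℝ)⁻¹)^k := by
  rw [zpow_neg, ← inv_zpow, zpow_natCast]

lemma norm_sub_appr (a : ℤ_[p]) (k : ℕ) : ‖a - (a.appr k : ℤ_[p])‖ ≤ ((p:ℝ)⁻¹)^k := by
  rw [← pow_neg_eq]
  exact (PadicInt.norm_le_pow_iff_mem_span_pow _ _).2 (PadicInt.appr_spec k a)

lemma tendsto_appr (a : ℤ_[p]) :
    Tendsto (fun k => ((a.appr k : ℤ_[p]))) atTop (𝓝 a) := by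
  rw [← tendsto_sub_nhds_zero_iff]
  have h : ∀ k:ℕ, ‖(a.appr k : ℤ_[p]) - a‖ ≤ ((p:ℝ)⁻¹)^k := by
    intro k; rw [norm_sub_rev]; exact norm_sub_appr a k
  exact squeeze_zero_norm h (tendsto_pow_atTop_nhds_zero_of_lt_one pinv_pos.le pinv_lt_one)

lemma norm_unit_pow_sub_one {u : ℤ_[p]ˣ} (hu : Good ((u:ℤ_[p]) - 1)) (m : ℕ) :
    ‖((u^m : ℤ_[p]ˣ) : ℤ_[p]) - 1‖ = ‖(m:ℤ_[p])‖ * ‖(u:ℤ_[p]) - 1‖ := by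
  have h1 : ((u^m : ℤ_[p]ˣ) : ℤ_[p]) = (1 + ((u:ℤ_[p]) - 1))^m := by
    rw [Units.val_pow_eq_pow_val]; ring_nf
  rw [h1, norm_pow_sub_one m hu]

lemma norm_unit_pow_sub_pow_le {u : ℤ_[p]ˣ} (hu : Good ((u:ℤ_[p]) - 1)) {t s : ℕ} (h : t ≤ s) :
    ‖((u^s : ℤ_[p]ˣ) : ℤ_[p]) - ((u^t : ℤ_[p]ˣ) : ℤ_[p])‖
      = ‖(s:ℤ_[p]) - (t:ℤ_[p])‖ * ‖(u:ℤ_[p]) - 1‖ := by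
  have key : ((u^s : ℤ_[p]ˣ) : ℤ_[p]) - ((u^t : ℤ_[p]ˣ) : ℤ_[p])
      = ((u^t : ℤ_[p]ˣ) : ℤ_[p]) * (((u^(s-t) : ℤ_[p]ˣ) : ℤ_[p]) - 1) := by
    have : u^s = u^t * u^(s-t) := by rw [← pow_add]; congr 1; omega
    rw [this]; push_cast; ring
  rw [key, norm_mul, PadicInt.norm_units, one_mul, norm_unit_pow_sub_one hu]
  congr 1
  rw [← Nat.cast_sub h]

lemma norm_unit_pow_sub_pow {u : ℤ_[p]ˣ} (hu : Good ((u:ℤ_[p]) - 1)) (s t : ℕ) :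
    ‖((u^s : ℤ_[p]ˣ) : ℤ_[p]) - ((u^t : ℤ_[p]ˣ) : ℤ_[p])‖
      = ‖(s:ℤ_[p]) - (t:ℤ_[p])‖ * ‖(u:ℤ_[p]) - 1‖ := by
  rcases le_total t s with h | h
  · exact norm_unit_pow_sub_pow_le hu h
  · rw [norm_sub_rev, norm_unit_pow_sub_pow_le hu h, norm_sub_rev]

/-- The limit of `g ^ (a.appr k)`, i.e. "`g ^ a`". -/
noncomputable def philim (g : ℤ_[p]ˣ) (a : ℤ_[p]) : ℤ_[p] :=
  limUnder atTop (fun k => ((g ^ a.appr k : ℤ_[p]ˣ) : ℤ_[p]))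

lemma cauchy_philim_seq {g : ℤ_[p]ˣ} (hg : Good ((g:ℤ_[p]) - 1)) (a : ℤ_[p]) :
    CauchySeq (fun k => ((g ^ a.appr k : ℤ_[p]ˣ) : ℤ_[p])) := by
  have hc : CauchySeq (fun k => ((a.appr k : ℤ_[p]))) := (tendsto_appr a).cauchySeq
  rw [Metric.cauchySeq_iff] at hc ⊢
  intro ε hε
  rcases eq_or_ne ((g:ℤ_[p]) - 1) 0 with h0 | h0
  · refine ⟨0, fun m _ n _ => ?_⟩
    rw [dist_eq_norm, norm_unit_pow_sub_pow hg, h0, norm_zero, mul_zero]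
    exact hε
  · have hxpos : (0:ℝ) < ‖(g:ℤ_[p]) - 1‖ := norm_pos_iff.mpr h0
    obtain ⟨N, hN⟩ := hc (ε / ‖(g:ℤ_[p]) - 1‖) (by positivity)
    refine ⟨N, fun m hm n hn => ?_⟩
    have := hN m hm n hn
    rw [dist_eq_norm] at this ⊢
    rw [norm_unit_pow_sub_pow hg]
    calc ‖((a.appr m : ℤ_[p])) - ((a.appr n : ℤ_[p]))‖ * ‖(g:ℤ_[p]) - 1‖
        < (ε / ‖(g:ℤ_[p]) - 1‖) * ‖(g:ℤ_[p]) - 1‖ :=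
          mul_lt_mul_of_pos_right this hxpos
      _ = ε := div_mul_cancel₀ ε hxpos.ne'

lemma tendsto_philim_appr {g : ℤ_[p]ˣ} (hg : Good ((g:ℤ_[p]) - 1)) (a : ℤ_[p]) :
    Tendsto (fun k => ((g ^ a.appr k : ℤ_[p]ˣ) : ℤ_[p])) atTop (𝓝 (philim g a)) :=
  (cauchy_philim_seq hg a).tendsto_limUnder

/-- Master lemma: any sequence of exponents converging to `a` works. -/
lemma tendsto_philim {g : ℤ_[p]ˣ} (hg : Good ((g:ℤ_[p]) - 1)) {a : ℤ_[p]} {n : ℕ → ℕ}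
    (hn : Tendsto (fun k => ((n k : ℤ_[p]))) atTop (𝓝 a)) :
    Tendsto (fun k => ((g ^ n k : ℤ_[p]ˣ) : ℤ_[p])) atTop (𝓝 (philim g a)) := by
  have base := tendsto_philim_appr hg a
  have hdiff : Tendsto (fun k => ((g ^ n k : ℤ_[p]ˣ) : ℤ_[p]) - ((g ^ a.appr k : ℤ_[p]ˣ) : ℤ_[p]))
      atTop (𝓝 0) := by
    have h1 : Tendsto (fun k => ‖((n k : ℤ_[p])) - ((a.appr k : ℤ_[p]))‖ * ‖(g:ℤ_[p]) - 1‖)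
        atTop (𝓝 (‖(0:ℤ_[p])‖ * ‖(g:ℤ_[p]) - 1‖)) := by
      apply Tendsto.mul_const
      apply Tendsto.norm
      have := hn.sub (tendsto_appr a)
      simpa using this
    rw [norm_zero, zero_mul] at h1
    apply squeeze_zero_norm _ h1
    intro k
    exact le_of_eq (norm_unit_pow_sub_pow hg _ _)
  have := hdiff.add base
  rw [zero_add] at this
  convert this using 2 with k
  ring

lemma philim_spec_of_tendsto {g : ℤ_[p]ˣ} (hg : Good ((g:ℤ_[p]) - 1)) {a L : ℤ_[p]} {n : ℕ → ℕ}
    (hn : Tendsto (fun k => ((n k : ℤ_[p]))) atTop (𝓝 a))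
    (hL : Tendsto (fun k => ((g ^ n k : ℤ_[p]ˣ) : ℤ_[p])) atTop (𝓝 L)) :
    philim g a = L :=
  tendsto_nhds_unique (tendsto_philim hg hn) hL

lemma philim_natCast {g : ℤ_[p]ˣ} (hg : Good ((g:ℤ_[p]) - 1)) (n : ℕ) :
    philim g (n : ℤ_[p]) = ((g ^ n : ℤ_[p]ˣ) : ℤ_[p]) :=
  philim_spec_of_tendsto hg (n := fun _ => n) tendsto_const_nhds tendsto_const_nhds

lemma philim_one {g : ℤ_[p]ˣ} (hg : Good ((g:ℤ_[p]) - 1)) : philim g (0 : ℤ_[p]) = 1 := by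
  have := philim_natCast hg 0
  simpa using this

lemma philim_add {g : ℤ_[p]ˣ} (hg : Good ((g:ℤ_[p]) - 1)) (a b : ℤ_[p]) :
    philim g (a + b) = philim g a * philim g b := by
  apply philim_spec_of_tendsto hg (n := fun k => a.appr k + b.appr k)
  · have := (tendsto_appr a).add (tendsto_appr b)
    simpa using this
  · have h1 := tendsto_philim_appr hg a
    have h2 := tendsto_philim_appr hg b
    have := h1.mul h2
    convert this using 2 with k
    rw [pow_add]; push_cast; ring

lemma philim_dist {g : ℤ_[p]ˣ} (hg : Good ((g:ℤ_[p]) - 1)) (a b : ℤ_[p]) :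
    ‖philim g a - philim g b‖ = ‖a - b‖ * ‖(g:ℤ_[p]) - 1‖ := by
  have h1 := (tendsto_philim_appr hg a).sub (tendsto_philim_appr hg b)
  have h2 : Tendsto (fun k => ‖((g ^ a.appr k : ℤ_[p]ˣ) : ℤ_[p]) - ((g ^ b.appr k : ℤ_[p]ˣ) : ℤ_[p])‖)
      atTop (𝓝 ‖philim g a - philim g b‖) := h1.norm
  have h3 : Tendsto (fun k => ‖((a.appr k : ℤ_[p])) - ((b.appr k : ℤ_[p]))‖ * ‖(g:ℤ_[p]) - 1‖)
      atTop (𝓝 (‖a - b‖ * ‖(g:ℤ_[p]) - 1‖)) :=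
    (((tendsto_appr a).sub (tendsto_appr b)).norm).mul_const _
  apply tendsto_nhds_unique _ h3
  convert h2 using 2 with k
  rw [norm_unit_pow_sub_pow hg]

lemma philim_norm_sub_one {g : ℤ_[p]ˣ} (hg : Good ((g:ℤ_[p]) - 1)) (a : ℤ_[p]) :
    ‖philim g a - 1‖ = ‖a‖ * ‖(g:ℤ_[p]) - 1‖ := by
  have := philim_dist hg a 0
  rwa [philim_one hg, sub_zero] at this

lemma philim_good {g : ℤ_[p]ˣ} (hg : Good ((g:ℤ_[p]) - 1)) (a : ℤ_[p]) :
    Good (philim g a - 1) := by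
  apply good_mono _ hg
  rw [philim_norm_sub_one hg]
  calc ‖a‖ * ‖(g:ℤ_[p]) - 1‖ ≤ 1 * ‖(g:ℤ_[p]) - 1‖ :=
        mul_le_mul_of_nonneg_right (PadicInt.norm_le_one a) (norm_nonneg _)
    _ = _ := one_mul _

lemma philim_continuous {g : ℤ_[p]ˣ} (hg : Good ((g:ℤ_[p]) - 1)) :
    Continuous (philim g) := by
  apply LipschitzWith.continuous (K := ⟨‖(g:ℤ_[p]) - 1‖, norm_nonneg _⟩)
  apply LipschitzWith.of_dist_le_mul
  intro a b
  rw [dist_eq_norm, dist_eq_norm, philim_dist hg]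
  show _ ≤ ‖(g:ℤ_[p]) - 1‖ * ‖a - b‖
  ring_nf
  exact le_refl _

lemma philim_mul_philim_neg {g : ℤ_[p]ˣ} (hg : Good ((g:ℤ_[p]) - 1)) (a : ℤ_[p]) :
    philim g a * philim g (-a) = 1 := by
  rw [← philim_add hg, add_neg_cancel, philim_one hg]

lemma good_inv {g : ℤ_[p]ˣ} (hg : Good ((g:ℤ_[p]) - 1)) :
    Good (((g⁻¹:ℤ_[p]ˣ):ℤ_[p]) - 1) := by
  apply good_mono _ hg
  have : ((g⁻¹:ℤ_[p]ˣ):ℤ_[p]) - 1 = ((g⁻¹:ℤ_[p]ˣ):ℤ_[p]) * (1 - (g:ℤ_[p])) := by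
    have hh : ((g⁻¹:ℤ_[p]ˣ):ℤ_[p]) * (g:ℤ_[p]) = 1 := by
      rw [← Units.val_mul, inv_mul_cancel, Units.val_one]
    rw [mul_sub, hh, mul_one]
  rw [this, norm_mul, PadicInt.norm_units, one_mul, norm_sub_rev]

/-- `g ^ a` as a unit. -/
noncomputable def phiU {g : ℤ_[p]ˣ} (hg : Good ((g:ℤ_[p]) - 1)) (a : ℤ_[p]) : ℤ_[p]ˣ :=
  Units.mkOfMulEqOne (philim g a) (philim g (-a)) (philim_mul_philim_neg hg a)

@[simp] lemma phiU_val {g : ℤ_[p]ˣ} (hg : Good ((g:ℤ_[p]) - 1)) (a : ℤ_[p]) :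
    ((phiU hg a : ℤ_[p]ˣ) : ℤ_[p]) = philim g a := rfl

@[simp] lemma phiU_inv_val {g : ℤ_[p]ˣ} (hg : Good ((g:ℤ_[p]) - 1)) (a : ℤ_[p]) :
    (((phiU hg a)⁻¹ : ℤ_[p]ˣ) : ℤ_[p]) = philim g (-a) := rfl

lemma phiU_mul {g : ℤ_[p]ˣ} (hg : Good ((g:ℤ_[p]) - 1)) (a b : ℤ_[p]) :
    phiU hg (a + b) = phiU hg a * phiU hg b :=
  Units.ext (philim_add hg a b)

lemma phiU_zero {g : ℤ_[p]ˣ} (hg : Good ((g:ℤ_[p]) - 1)) : phiU hg 0 = 1 :=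
  Units.ext (philim_one hg)

lemma phiU_pow {g : ℤ_[p]ˣ} (hg : Good ((g:ℤ_[p]) - 1)) (a : ℤ_[p]) (n : ℕ) :
    (phiU hg a)^n = phiU hg ((n:ℤ_[p]) * a) := by
  induction n with
  | zero => simp [phiU_zero hg]
  | succ m ih =>
    rw [pow_succ, ih]
    rw [← phiU_mul hg]
    congr 1
    push_cast
    ring

lemma phiU_natCast {g : ℤ_[p]ˣ} (hg : Good ((g:ℤ_[p]) - 1)) (n : ℕ) :
    phiU hg (n : ℤ_[p]) = g ^ n :=
  Units.ext (philim_natCast hg n)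

lemma phiU_inj {g : ℤ_[p]ˣ} (hg : Good ((g:ℤ_[p]) - 1)) (hg1 : g ≠ 1) {a b : ℤ_[p]}
    (h : phiU hg a = phiU hg b) : a = b := by
  have hx0 : (g:ℤ_[p]) - 1 ≠ 0 := sub_ne_zero.mpr (fun hh => hg1 (Units.ext hh))
  have := philim_dist hg a b
  have hval : philim g a = philim g b := congrArg Units.val h
  rw [hval, sub_self, norm_zero] at this
  have h2 : ‖a - b‖ = 0 := by
    rcases mul_eq_zero.mp this.symm with h' | h'
    · exact h'
    · exact absurd h' (norm_pos_iff.mpr hx0).ne'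
  have h3 : a - b = 0 := by rwa [norm_eq_zero] at h2
  exact sub_eq_zero.mp h3

lemma philim_inv {g : ℤ_[p]ˣ} (hg : Good ((g:ℤ_[p]) - 1)) (a : ℤ_[p]) :
    philim (g⁻¹) a = philim g (-a) := by
  have hginv := good_inv hg
  have h1 : Tendsto (fun k => (((g⁻¹)^ a.appr k : ℤ_[p]ˣ) : ℤ_[p]) * ((g ^ a.appr k : ℤ_[p]ˣ) : ℤ_[p]))
      atTop (𝓝 (philim g⁻¹ a * philim g a)) :=
    (tendsto_philim_appr hginv a).mul (tendsto_philim_appr hg a)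
  have h2 : ∀ k:ℕ, (((g⁻¹)^ a.appr k : ℤ_[p]ˣ) : ℤ_[p]) * ((g ^ a.appr k : ℤ_[p]ˣ) : ℤ_[p]) = 1 := by
    intro k
    rw [← Units.val_mul, ← mul_pow, inv_mul_cancel, one_pow, Units.val_one]
  have h3 : philim g⁻¹ a * philim g a = 1 := by
    apply tendsto_nhds_unique h1
    simp only [h2]
    exact tendsto_const_nhds
  have h4 : philim g a * philim g (-a) = 1 := philim_mul_philim_neg hg a
  calc philim g⁻¹ a = philim g⁻¹ a * (philim g a * philim g (-a)) := by rw [h4, mul_one]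
    _ = (philim g⁻¹ a * philim g a) * philim g (-a) := by ring
    _ = philim g (-a) := by rw [h3, one_mul]

/-- convergence of `g ^ n k → phiU hg a` in the topology of the unit group. -/
lemma tendsto_phiU {g : ℤ_[p]ˣ} (hg : Good ((g:ℤ_[p]) - 1)) {a : ℤ_[p]} {n : ℕ → ℕ}
    (hn : Tendsto (fun k => ((n k : ℤ_[p]))) atTop (𝓝 a)) :
    Tendsto (fun k => g ^ n k) atTop (𝓝 (phiU hg a)) := by
  rw [Units.isEmbedding_embedProduct.isInducing.tendsto_nhds_iff]
  have h1 : Tendsto (fun k => ((g ^ n k : ℤ_[p]ˣ) : ℤ_[p])) atTop (𝓝 (philim g a)) :=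
    tendsto_philim hg hn
  have h2 : Tendsto (fun k => (((g ^ n k)⁻¹ : ℤ_[p]ˣ) : ℤ_[p])) atTop (𝓝 (philim g (-a))) := by
    have := tendsto_philim (good_inv hg) hn
    rw [philim_inv hg] at this
    simpa only [inv_pow] using this
  exact (h1.prodMk_nhds (((MulOpposite.continuous_op).tendsto _).comp h2))

lemma phiU_mem_of_closed {g : ℤ_[p]ˣ} (hg : Good ((g:ℤ_[p]) - 1)) {S : Subgroup (ℤ_[p])ˣ}
    (hS : IsClosed (S : Set (ℤ_[p])ˣ)) (hgS : g ∈ S) (a : ℤ_[p]) :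
    phiU hg a ∈ S := by
  have := tendsto_phiU hg (tendsto_appr a)
  exact hS.mem_of_tendsto this (Filter.Eventually.of_forall (fun k => pow_mem hgS _))

lemma phiU_continuous {g : ℤ_[p]ˣ} (hg : Good ((g:ℤ_[p]) - 1)) :
    Continuous (fun a => phiU hg a) := by
  rw [Units.continuous_iff]
  constructor
  · exact philim_continuous hg
  · show Continuous fun a => philim g (-a)
    exact (philim_continuous hg).comp continuous_neg

lemma philim_comp {g : ℤ_[p]ˣ} (hg : Good ((g:ℤ_[p]) - 1)) (c : ℤ_[p])
    (hc : Good (((phiU hg c : ℤ_[p]ˣ):ℤ_[p]) - 1)) (a : ℤ_[p]) :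
    philim (phiU hg c) a = philim g (c * a) := by
  have heq : (fun a => philim (phiU hg c) a) = (fun a => philim g (c * a)) := by
    apply DenseRange.equalizer PadicInt.denseRange_natCast
    · exact philim_continuous hc
    · exact (philim_continuous hg).comp (continuous_const.mul continuous_id)
    · funext n
      show philim (phiU hg c) (n:ℤ_[p]) = philim g (c * (n:ℤ_[p]))
      rw [philim_natCast hc n]
      have : (phiU hg c)^n = phiU hg (c * (n:ℤ_[p])) := by
        rw [phiU_pow hg c n]; congr 1; ring
      rw [this, phiU_val]
  exact congrFun heq a

lemma phiU_comp {g : ℤ_[p]ˣ} (hg : Good ((g:ℤ_[p]) - 1)) (c : ℤ_[p])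
    (hc : Good (((phiU hg c : ℤ_[p]ˣ):ℤ_[p]) - 1)) (a : ℤ_[p]) :
    phiU hc a = phiU hg (c * a) := by
  apply Units.ext
  rw [phiU_val, phiU_val, philim_comp hg c hc a]

lemma norm_sub_one_mem_span {c : ℤ_[p]} (h : PadicInt.toZMod c = 0) : ‖c‖ ≤ (p:ℝ)⁻¹ := by
  have hmem : c ∈ Ideal.span {(p:ℤ_[p])^1} := by
    rw [pow_one, ← PadicInt.maximalIdeal_eq_span_p, ← PadicInt.ker_toZMod]
    exact h
  have := (PadicInt.norm_le_pow_iff_mem_span_pow c 1).2 hmem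
  simpa [pow_neg_eq] using this

/-- One step of successive approximation. -/
lemma approx_step {g : ℤ_[p]ˣ} (hg : Good ((g:ℤ_[p]) - 1)) (hg1 : g ≠ 1) (y : ℤ_[p]ˣ)
    (k m : ℕ) (hm : ‖(y:ℤ_[p]) - ((g^m:ℤ_[p]ˣ):ℤ_[p])‖ ≤ ((p:ℝ)⁻¹)^k * ‖(g:ℤ_[p]) - 1‖) :
    ∃ m' : ℕ, ‖((m':ℤ_[p])) - ((m:ℤ_[p]))‖ ≤ ((p:ℝ)⁻¹)^k ∧
      ‖(y:ℤ_[p]) - ((g^m':ℤ_[p]ˣ):ℤ_[p])‖ ≤ ((p:ℝ)⁻¹)^(k+1) * ‖(g:ℤ_[p]) - 1‖ := by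
  have hx0 : (g:ℤ_[p]) - 1 ≠ 0 := sub_ne_zero.mpr (fun hh => hg1 (Units.ext hh))
  have hxpos : (0:ℝ) < ‖(g:ℤ_[p]) - 1‖ := norm_pos_iff.mpr hx0
  set x : ℤ_[p] := (g:ℤ_[p]) - 1 with hxdef
  -- the element w = g^(p^k)
  set w : ℤ_[p]ˣ := g ^ (p^k) with hwdef
  set β : ℤ_[p] := (w:ℤ_[p]) - 1 with hβdef
  have hβ : ‖β‖ = ((p:ℝ)⁻¹)^k * ‖x‖ := by
    rw [hβdef, hwdef, norm_unit_pow_sub_one hg]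
    congr 1
    have : ((p^k : ℕ) : ℤ_[p]) = (p:ℤ_[p])^k := by push_cast; ring
    rw [this, PadicInt.norm_p_pow, pow_neg_eq]
  have hβpos : (0:ℝ) < ‖β‖ := by rw [hβ]; exact mul_pos (pow_pos pinv_pos k) hxpos
  have hβ0 : β ≠ 0 := norm_pos_iff.mp hβpos
  -- the element u = y / g^m
  set u : ℤ_[p]ˣ := y * (g^m)⁻¹ with hudef
  set α : ℤ_[p] := (u:ℤ_[p]) - 1 with hαdef
  have hα : ‖α‖ = ‖(y:ℤ_[p]) - ((g^m:ℤ_[p]ˣ):ℤ_[p])‖ := by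
    have h1 : ((g^m:ℤ_[p]ˣ):ℤ_[p]) * (((g^m)⁻¹:ℤ_[p]ˣ):ℤ_[p]) = 1 := by
      rw [← Units.val_mul, mul_inv_cancel, Units.val_one]
    have h2 : α = ((y:ℤ_[p]) - ((g^m:ℤ_[p]ˣ):ℤ_[p])) * (((g^m)⁻¹:ℤ_[p]ˣ):ℤ_[p]) := by
      rw [hαdef, hudef, Units.val_mul, sub_mul, h1]
    rw [h2, norm_mul, PadicInt.norm_units, mul_one]
  have hαβ : ‖α‖ ≤ ‖β‖ := by rw [hα, hβ]; exact hm
  -- divide: α = β * c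
  obtain ⟨c, hc⟩ : ∃ c : ℤ_[p], α = β * c := by
    obtain ⟨n, hβv⟩ : ∃ n : ℕ, ‖β‖ = (p:ℝ)^(-(n:ℤ)) := by
      refine ⟨β.valuation, ?_⟩
      rw [PadicInt.norm_eq_zpow_neg_valuation hβ0]
    obtain ⟨dβ, hdβ⟩ : (p:ℤ_[p])^n ∣ β := by
      rw [← Ideal.mem_span_singleton, ← PadicInt.norm_le_pow_iff_mem_span_pow, ← hβv]
    obtain ⟨dα, hdα⟩ : (p:ℤ_[p])^n ∣ α := by
      rw [← Ideal.mem_span_singleton, ← PadicInt.norm_le_pow_iff_mem_span_pow, ← hβv]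
      exact hαβ
    have hdβu : IsUnit dβ := by
      rw [PadicInt.isUnit_iff]
      have hpn : ‖(p:ℤ_[p])^n‖ = (p:ℝ)^(-(n:ℤ)) := PadicInt.norm_p_pow _
      have heq := congrArg norm hdβ
      rw [norm_mul, hβv, hpn] at heq
      have hpos : (0:ℝ) < (p:ℝ)^(-(n:ℤ)) := by
        have := one_lt_p (p := p); positivity
      exact mul_left_cancel₀ hpos.ne' (heq.symm.trans (mul_one _).symm)
    obtain ⟨eu, heu⟩ := hdβu
    refine ⟨((eu⁻¹ : ℤ_[p]ˣ):ℤ_[p]) * dα, ?_⟩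
    have h1 : ((eu : ℤ_[p]ˣ):ℤ_[p]) * ((eu⁻¹ : ℤ_[p]ˣ):ℤ_[p]) = 1 := by
      rw [← Units.val_mul, mul_inv_cancel, Units.val_one]
    have h2 : β * (((eu⁻¹ : ℤ_[p]ˣ):ℤ_[p]) * dα)
        = ((p:ℤ_[p])^n * dα) * (((eu : ℤ_[p]ˣ):ℤ_[p]) * ((eu⁻¹ : ℤ_[p]ˣ):ℤ_[p])) := by
      rw [hdβ, ← heu]; ring
    rw [hdα, h2, h1, mul_one]
  -- choose j
  have : NeZero p := ⟨hp.out.ne_zero⟩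
  set j : ℕ := (PadicInt.toZMod c).val with hjdef
  have hcj : ‖c - (j:ℤ_[p])‖ ≤ (p:ℝ)⁻¹ := by
    apply norm_sub_one_mem_span
    rw [map_sub, map_natCast, hjdef, ZMod.natCast_val, ZMod.cast_id, sub_self]
  refine ⟨m + j * p^k, ?_, ?_⟩
  · have hcast : ((m + j * p^k : ℕ) : ℤ_[p]) - (m:ℤ_[p]) = (j:ℤ_[p]) * (p:ℤ_[p])^k := by
      push_cast; ring
    rw [hcast, norm_mul]
    calc ‖(j:ℤ_[p])‖ * ‖(p:ℤ_[p])^k‖ ≤ 1 * ‖(p:ℤ_[p])^k‖ :=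
          mul_le_mul_of_nonneg_right (PadicInt.norm_le_one _) (norm_nonneg _)
      _ = ((p:ℝ)⁻¹)^k := by rw [one_mul, PadicInt.norm_p_pow, pow_neg_eq]
  · -- main estimate
    have hsplit : (y:ℤ_[p]) - ((g^(m + j * p^k):ℤ_[p]ˣ):ℤ_[p])
        = ((g^m:ℤ_[p]ˣ):ℤ_[p]) * ((u:ℤ_[p]) - ((w^j:ℤ_[p]ˣ):ℤ_[p])) := by
      have h1 : g^(m + j * p^k) = g^m * w^j := by
        rw [hwdef, ← pow_mul, ← pow_add]
        congr 1
        ring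
      have hinv : ((g^m:ℤ_[p]ˣ):ℤ_[p]) * (((g^m)⁻¹:ℤ_[p]ˣ):ℤ_[p]) = 1 := by
        rw [← Units.val_mul, mul_inv_cancel, Units.val_one]
      have h2 : (y:ℤ_[p]) = ((g^m:ℤ_[p]ˣ):ℤ_[p]) * (u:ℤ_[p]) := by
        rw [hudef, Units.val_mul,
          show ((g^m:ℤ_[p]ˣ):ℤ_[p]) * ((y:ℤ_[p]) * (((g^m)⁻¹:ℤ_[p]ˣ):ℤ_[p]))
            = (y:ℤ_[p]) * (((g^m:ℤ_[p]ˣ):ℤ_[p]) * (((g^m)⁻¹:ℤ_[p]ˣ):ℤ_[p])) from by ring,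
          hinv, mul_one]
      rw [h1, Units.val_mul]
      nth_rewrite 1 [h2]
      ring
    rw [hsplit, norm_mul, PadicInt.norm_units, one_mul]
    -- u - w^j = β(c-j) - β² S
    obtain ⟨S, hS⟩ := one_add_pow β j
    have hwj : ((w^j:ℤ_[p]ˣ):ℤ_[p]) = (1+β)^j := by
      rw [Units.val_pow_eq_pow_val]
      congr 1
      rw [hβdef]; ring
    have hkey : (u:ℤ_[p]) - ((w^j:ℤ_[p]ˣ):ℤ_[p]) = β * (c - (j:ℤ_[p])) - β^2 * S := by
      rw [hwj, hS]
      have hu : (u:ℤ_[p]) = 1 + α := by rw [hαdef]; ring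
      rw [hu, hc]
      ring
    rw [hkey]
    have hterm1 : ‖β * (c - (j:ℤ_[p]))‖ ≤ ((p:ℝ)⁻¹)^(k+1) * ‖x‖ := by
      rw [norm_mul, hβ]
      calc ((p:ℝ)⁻¹)^k * ‖x‖ * ‖c - (j:ℤ_[p])‖ ≤ ((p:ℝ)⁻¹)^k * ‖x‖ * (p:ℝ)⁻¹ :=
            mul_le_mul_of_nonneg_left hcj (by positivity)
        _ = ((p:ℝ)⁻¹)^(k+1) * ‖x‖ := by ring
    have hterm2 : ‖β^2 * S‖ ≤ ((p:ℝ)⁻¹)^(k+1) * ‖x‖ := by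
      rw [norm_mul, norm_pow, hβ]
      have h1 : (((p:ℝ)⁻¹)^k * ‖x‖)^2 = ((p:ℝ)⁻¹)^k * (((p:ℝ)⁻¹)^k * (‖x‖ * ‖x‖)) := by ring
      calc (((p:ℝ)⁻¹)^k * ‖x‖)^2 * ‖S‖ ≤ (((p:ℝ)⁻¹)^k * ‖x‖)^2 * 1 :=
            mul_le_mul_of_nonneg_left (PadicInt.norm_le_one _) (by positivity)
        _ = ((p:ℝ)⁻¹)^k * (((p:ℝ)⁻¹)^k * (‖x‖ * ‖x‖)) := by ring
        _ ≤ ((p:ℝ)⁻¹)^k * (1 * (‖x‖ * ‖x‖)) := by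
            apply mul_le_mul_of_nonneg_left _ (by positivity)
            apply mul_le_mul_of_nonneg_right _ (by positivity)
            exact pow_le_one₀ pinv_pos.le pinv_lt_one.le
        _ = ((p:ℝ)⁻¹)^k * (‖x‖ * ‖x‖) := by ring
        _ ≤ ((p:ℝ)⁻¹)^k * ((p:ℝ)⁻¹ * ‖x‖) := by
            apply mul_le_mul_of_nonneg_left _ (by positivity)
            exact mul_le_mul_of_nonneg_right hg.1 (norm_nonneg _)
        _ = ((p:ℝ)⁻¹)^(k+1) * ‖x‖ := by ring
    calc ‖β * (c - (j:ℤ_[p])) - β^2 * S‖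
        ≤ max ‖β * (c - (j:ℤ_[p]))‖ ‖β^2 * S‖ := by
          have := PadicInt.nonarchimedean (β * (c - (j:ℤ_[p]))) (-(β^2 * S))
          simpa [sub_eq_add_neg] using this
      _ ≤ ((p:ℝ)⁻¹)^(k+1) * ‖x‖ := max_le hterm1 hterm2

/-- Surjectivity of `phiU` onto the ball `‖y - 1‖ ≤ ‖g - 1‖`. -/
lemma phiU_surj {g : ℤ_[p]ˣ} (hg : Good ((g:ℤ_[p]) - 1)) (hg1 : g ≠ 1) (y : ℤ_[p]ˣ)
    (hy : ‖(y:ℤ_[p]) - 1‖ ≤ ‖(g:ℤ_[p]) - 1‖) : ∃ a : ℤ_[p], phiU hg a = y := by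
  have step := approx_step hg hg1 y
  choose f hf1 hf2 using step
  set Bound : ℕ → ℕ → Prop :=
    fun k m => ‖(y:ℤ_[p]) - ((g^m:ℤ_[p]ˣ):ℤ_[p])‖ ≤ ((p:ℝ)⁻¹)^k * ‖(g:ℤ_[p]) - 1‖ with hBdef
  have base : Bound 0 0 := by
    rw [hBdef]
    simp only [pow_zero, Units.val_one, one_mul]
    exact hy
  let seq : ∀ _ : ℕ, {m : ℕ // Bound _ m} := fun k =>
    Nat.rec (motive := fun k => {m : ℕ // Bound k m}) ⟨0, base⟩
      (fun k ih => ⟨f k ih.1 ih.2, hf2 k ih.1 ih.2⟩) k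
  set N : ℕ → ℕ := fun k => (seq k).1 with hNdef
  have hNb : ∀ k, Bound k (N k) := fun k => (seq k).2
  have hNstep : ∀ k, ‖((N (k+1) : ℤ_[p])) - ((N k : ℤ_[p]))‖ ≤ ((p:ℝ)⁻¹)^k :=
    fun k => hf1 k (N k) (hNb k)
  have hcau : CauchySeq (fun k => ((N k : ℤ_[p]))) := by
    apply cauchySeq_of_le_geometric ((p:ℝ)⁻¹) 1 pinv_lt_one
    intro k
    rw [dist_eq_norm, norm_sub_rev, one_mul]
    exact hNstep k
  set a : ℤ_[p] := limUnder atTop (fun k => ((N k : ℤ_[p]))) with hadef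
  have ha : Tendsto (fun k => ((N k : ℤ_[p]))) atTop (𝓝 a) := hcau.tendsto_limUnder
  refine ⟨a, Units.ext ?_⟩
  rw [phiU_val]
  apply tendsto_nhds_unique (tendsto_philim hg ha)
  rw [tendsto_iff_norm_sub_tendsto_zero]
  have hgt : Tendsto (fun k => ((p:ℝ)⁻¹)^k * ‖(g:ℤ_[p]) - 1‖) atTop (𝓝 0) := by
    have := (tendsto_pow_atTop_nhds_zero_of_lt_one (pinv_pos (p := p)).le
      (pinv_lt_one (p := p))).mul_const ‖(g:ℤ_[p]) - 1‖
    simpa using this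
  apply squeeze_zero_norm _ hgt
  intro k
  rw [norm_norm, norm_sub_rev]
  exact hNb k

lemma phiU_neg {g : ℤ_[p]ˣ} (hg : Good ((g:ℤ_[p]) - 1)) (a : ℤ_[p]) :
    phiU hg (-a) = (phiU hg a)⁻¹ := by
  have h1 : phiU hg a * phiU hg (-a) = 1 := by
    rw [← phiU_mul hg, add_neg_cancel, phiU_zero hg]
  exact eq_inv_of_mul_eq_one_right h1

instance compactSpace_units : CompactSpace (ℤ_[p])ˣ := by
  haveI : CompactSpace (ℤ_[p]ᵐᵒᵖ) := MulOpposite.opHomeomorph.compactSpace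
  have hS : IsClosed {z : ℤ_[p] × ℤ_[p]ᵐᵒᵖ | z.1 * z.2.unop = 1 ∧ z.2.unop * z.1 = 1} := by
    apply IsClosed.inter
    · exact isClosed_eq (continuous_fst.mul (MulOpposite.continuous_unop.comp continuous_snd))
        continuous_const
    · exact isClosed_eq ((MulOpposite.continuous_unop.comp continuous_snd).mul continuous_fst)
        continuous_const
  have hrange : Set.range (Units.embedProduct ℤ_[p])
      = {z : ℤ_[p] × ℤ_[p]ᵐᵒᵖ | z.1 * z.2.unop = 1 ∧ z.2.unop * z.1 = 1} := by
    ext z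
    constructor
    · rintro ⟨u, rfl⟩
      constructor
      · show (u:ℤ_[p]) * ((MulOpposite.op ((u⁻¹:ℤ_[p]ˣ):ℤ_[p])).unop) = 1
        rw [MulOpposite.unop_op, ← Units.val_mul, mul_inv_cancel, Units.val_one]
      · show ((MulOpposite.op ((u⁻¹:ℤ_[p]ˣ):ℤ_[p])).unop) * (u:ℤ_[p]) = 1
        rw [MulOpposite.unop_op, ← Units.val_mul, inv_mul_cancel, Units.val_one]
    · rintro ⟨h1, h2⟩
      refine ⟨⟨z.1, z.2.unop, h1, h2⟩, ?_⟩
      show (z.1, MulOpposite.op z.2.unop) = z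
      rw [MulOpposite.op_unop]
  rw [← isCompact_univ_iff]
  have himg : IsCompact ((Units.embedProduct ℤ_[p]) '' Set.univ) := by
    rw [Set.image_univ, hrange]
    exact hS.isCompact
  exact Units.isEmbedding_embedProduct.isCompact_iff.mpr himg

lemma zmod_two_ne_zero_eq_one : ∀ z : ZMod 2, z ≠ 0 → z = 1 := by decide

lemma norm_unit_sq_sub_one_two (hp2 : p = 2) (h : ℤ_[p]ˣ) :
    ‖((h^2 : ℤ_[p]ˣ):ℤ_[p]) - 1‖ ≤ ((p:ℝ)⁻¹)^2 := by
  subst hp2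
  have key : ∀ u : ℤ_[2]ˣ, ∀ s : ℤ_[2], PadicInt.toZMod s = PadicInt.toZMod (u:ℤ_[2]) →
      ‖(u:ℤ_[2]) - s‖ ≤ ((2:ℝ))⁻¹ → True := fun _ _ _ _ => trivial
  have h1 : ‖(h:ℤ_[2]) - 1‖ ≤ ((2:ℕ):ℝ)⁻¹ := by
    apply norm_sub_one_mem_span
    rw [map_sub, map_one]
    have hu : IsUnit (PadicInt.toZMod ((h:ℤ_[2]))) := (h.isUnit).map PadicInt.toZMod
    have := zmod_two_ne_zero_eq_one _ hu.ne_zero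
    rw [this, sub_self]
  have h2 : ‖(h:ℤ_[2]) + 1‖ ≤ ((2:ℕ):ℝ)⁻¹ := by
    apply norm_sub_one_mem_span
    rw [map_add, map_one]
    have hu : IsUnit (PadicInt.toZMod ((h:ℤ_[2]))) := (h.isUnit).map PadicInt.toZMod
    have := zmod_two_ne_zero_eq_one _ hu.ne_zero
    rw [this]
    rfl
  have hfact : ((h^2 : ℤ_[2]ˣ):ℤ_[2]) - 1 = ((h:ℤ_[2]) - 1) * ((h:ℤ_[2]) + 1) := by
    rw [Units.val_pow_eq_pow_val]; ring
  rw [hfact, norm_mul, sq]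
  exact mul_le_mul h1 h2 (norm_nonneg _) (by positivity)

/-- For every unit `h`, `h^(2(p-1))` is a good 1-unit. -/
lemma good_unit_pow (h : ℤ_[p]ˣ) : Good (((h^(2*(p-1)) : ℤ_[p]ˣ):ℤ_[p]) - 1) := by
  by_cases hp2 : p = 2
  · have h22 : 2*(p-1) = 2 := by omega
    rw [h22]
    exact good_of_le_sq (norm_unit_sq_sub_one_two hp2 h)
  · apply good_of_odd hp2
    apply norm_sub_one_mem_span
    rw [map_sub, map_one, Units.val_pow_eq_pow_val, map_pow]
    have hu : IsUnit (PadicInt.toZMod ((h:ℤ_[p]))) := (h.isUnit).map PadicInt.toZMod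
    have hferm : (PadicInt.toZMod ((h:ℤ_[p])))^(p-1) = 1 :=
      ZMod.pow_card_sub_one_eq_one hu.ne_zero
    rw [mul_comm 2 (p-1), pow_mul, hferm, one_pow, sub_self]

/-- Pigeonhole: an infinite subgroup contains a nontrivial good element. -/
lemma exists_good_ne_one {H : Subgroup (ℤ_[p])ˣ} (hinf : Infinite H) :
    ∃ g : ℤ_[p]ˣ, g ∈ H ∧ g ≠ 1 ∧ Good ((g:ℤ_[p]) - 1) := by
  haveI : NeZero (p^2) := ⟨pow_ne_zero 2 hp.out.ne_zero⟩
  obtain ⟨c, hc⟩ := Finite.exists_infinite_fiber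
    (fun h : H => PadicInt.toZModPow 2 (((h : (ℤ_[p])ˣ)) : ℤ_[p]))
  haveI := hc
  obtain ⟨⟨h₁, hfib₁⟩, ⟨h₂, hfib₂⟩, hne⟩ :=
    exists_pair_ne ((fun h : H => PadicInt.toZModPow 2 (((h : (ℤ_[p])ˣ)) : ℤ_[p])) ⁻¹' {c})
  simp only [Set.mem_preimage, Set.mem_singleton_iff] at hfib₁ hfib₂
  refine ⟨(h₁ : (ℤ_[p])ˣ) * ((h₂ : (ℤ_[p])ˣ))⁻¹, mul_mem h₁.2 (inv_mem h₂.2), ?_, ?_⟩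
  · intro hcon
    apply hne
    have : (h₁ : (ℤ_[p])ˣ) = (h₂ : (ℤ_[p])ˣ) := by
      have := congrArg (fun z => z * (h₂ : (ℤ_[p])ˣ)) hcon
      simpa [mul_assoc] using this
    exact Subtype.ext (Subtype.ext this)
  · apply good_of_le_sq
    have hker : ((h₁ : (ℤ_[p])ˣ) : ℤ_[p]) - ((h₂ : (ℤ_[p])ˣ) : ℤ_[p]) ∈ Ideal.span {(p:ℤ_[p])^2} := by
      rw [← PadicInt.ker_toZModPow]
      show PadicInt.toZModPow 2 _ = 0
      rw [map_sub, hfib₁, hfib₂, sub_self]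
    have hnorm : ‖((h₁ : (ℤ_[p])ˣ) : ℤ_[p]) - ((h₂ : (ℤ_[p])ˣ) : ℤ_[p])‖ ≤ ((p:ℝ)⁻¹)^2 := by
      rw [← pow_neg_eq]
      exact (PadicInt.norm_le_pow_iff_mem_span_pow _ 2).2 hker
    have hval : (((h₁ : (ℤ_[p])ˣ) * ((h₂ : (ℤ_[p])ˣ))⁻¹ : (ℤ_[p])ˣ) : ℤ_[p]) - 1
        = (((h₁ : (ℤ_[p])ˣ) : ℤ_[p]) - ((h₂ : (ℤ_[p])ˣ) : ℤ_[p])) * ((((h₂ : (ℤ_[p])ˣ))⁻¹ : (ℤ_[p])ˣ) : ℤ_[p]) := by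
      have hinv : (((h₂ : (ℤ_[p])ˣ)) : ℤ_[p]) * ((((h₂ : (ℤ_[p])ˣ))⁻¹ : (ℤ_[p])ˣ) : ℤ_[p]) = 1 := by
        rw [← Units.val_mul, mul_inv_cancel, Units.val_one]
      rw [Units.val_mul, sub_mul, hinv]
    rw [hval, norm_mul, PadicInt.norm_units, mul_one]
    exact hnorm

/-- Existence of a good element of maximal norm. -/
lemma exists_max_good {H : Subgroup (ℤ_[p])ˣ} (hinf : Infinite H) :
    ∃ g : ℤ_[p]ˣ, g ∈ H ∧ g ≠ 1 ∧ Good ((g:ℤ_[p]) - 1) ∧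
      ∀ y : ℤ_[p]ˣ, y ∈ H → Good ((y:ℤ_[p]) - 1) → ‖(y:ℤ_[p]) - 1‖ ≤ ‖(g:ℤ_[p]) - 1‖ := by
  obtain ⟨g₀, hg₀H, hg₀1, hg₀⟩ := exists_good_ne_one hinf
  set S : Set ℕ := {n | ∃ y : ℤ_[p]ˣ, y ∈ H ∧ y ≠ 1 ∧ Good ((y:ℤ_[p]) - 1) ∧
    ((y:ℤ_[p]) - 1).valuation = n} with hSdef
  have hSne : S.Nonempty := ⟨_, g₀, hg₀H, hg₀1, hg₀, rfl⟩
  obtain ⟨y, hyH, hy1, hygood, hyval⟩ := Nat.sInf_mem hSne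
  refine ⟨y, hyH, hy1, hygood, ?_⟩
  intro z hzH hzgood
  rcases eq_or_ne z 1 with rfl | hz1
  · simp only [Units.val_one, sub_self, norm_zero]
    exact norm_nonneg _
  · have hzmem : ((z:ℤ_[p]) - 1).valuation ∈ S := ⟨z, hzH, hz1, hzgood, rfl⟩
    have hle := Nat.sInf_le hzmem
    rw [← hyval] at hle
    have hz0 : (z:ℤ_[p]) - 1 ≠ 0 := sub_ne_zero.mpr (fun hh => hz1 (Units.ext hh))
    have hy0 : (y:ℤ_[p]) - 1 ≠ 0 := sub_ne_zero.mpr (fun hh => hy1 (Units.ext hh))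
    rw [PadicInt.norm_eq_zpow_neg_valuation hz0, PadicInt.norm_eq_zpow_neg_valuation hy0]
    apply zpow_le_zpow_right₀ (one_lt_p (p := p)).le
    omega

/-- Main assembly: if H is covered by `T · (good ball around 1)` with `g` of maximal norm,
then `H ≅ ℤ_p × T` topologically. -/
lemma assembly (H : Subgroup (ℤ_[p])ˣ) (hclosed : IsClosed (H : Set (ℤ_[p])ˣ))
    (g : ℤ_[p]ˣ) (hgH : g ∈ H) (hg1 : g ≠ 1) (hg : Good ((g:ℤ_[p]) - 1))
    (T : Subgroup (ℤ_[p])ˣ) (hTH : T ≤ H) (hTfin : Finite T)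
    (hTtor : ∀ τ ∈ T, τ ^ (2*(p-1)) = 1)
    (hcover : ∀ h ∈ H, ∃ τ ∈ T, Good (((h * τ⁻¹ : ℤ_[p]ˣ):ℤ_[p]) - 1) ∧
      ‖((h * τ⁻¹ : ℤ_[p]ˣ):ℤ_[p]) - 1‖ ≤ ‖(g:ℤ_[p]) - 1‖) :
    ∃ (Δ : Type) (_ : Group Δ) (_ : Finite Δ) (_ : TopologicalSpace Δ) (_ : DiscreteTopology Δ),
      ∃ e : H ≃* Multiplicative ℤ_[p] × Δ, Continuous e ∧ Continuous e.symm := by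
  classical
  letI tΔ : TopologicalSpace T := ⊥
  haveI hdisc : DiscreteTopology T := ⟨rfl⟩
  -- the map
  have hmem : ∀ (x : Multiplicative ℤ_[p] × T),
      phiU hg (Multiplicative.toAdd x.1) * ((x.2 : (ℤ_[p])ˣ)) ∈ H :=
    fun x => mul_mem (phiU_mem_of_closed hg hclosed hgH _) (hTH x.2.2)
  set Ψf : Multiplicative ℤ_[p] × T → H :=
    fun x => ⟨phiU hg (Multiplicative.toAdd x.1) * ((x.2 : (ℤ_[p])ˣ)), hmem x⟩ with hΨdef
  have Ψmul : ∀ x y, Ψf (x * y) = Ψf x * Ψf y := by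
    intro x y
    apply Subtype.ext
    show phiU hg (Multiplicative.toAdd (x.1 * y.1)) * ((x.2 * y.2 : T) : (ℤ_[p])ˣ)
      = (phiU hg (Multiplicative.toAdd x.1) * ((x.2 : (ℤ_[p])ˣ)))
        * (phiU hg (Multiplicative.toAdd y.1) * ((y.2 : (ℤ_[p])ˣ)))
    rw [toAdd_mul, phiU_mul hg]
    push_cast
    exact mul_mul_mul_comm _ _ _ _
  have hinj : Function.Injective Ψf := by
    rintro ⟨a, σ⟩ ⟨b, τ⟩ hxy
    have h1 : phiU hg (Multiplicative.toAdd a) * ((σ : (ℤ_[p])ˣ))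
        = phiU hg (Multiplicative.toAdd b) * ((τ : (ℤ_[p])ˣ)) := congrArg Subtype.val hxy
    have h2 : phiU hg (Multiplicative.toAdd a + -(Multiplicative.toAdd b))
        = ((τ : (ℤ_[p])ˣ)) * ((σ : (ℤ_[p])ˣ))⁻¹ := by
      rw [phiU_mul hg, phiU_neg hg]
      calc phiU hg (Multiplicative.toAdd a) * (phiU hg (Multiplicative.toAdd b))⁻¹
          = (phiU hg (Multiplicative.toAdd a) * ((σ : (ℤ_[p])ˣ)))
            * ((σ : (ℤ_[p])ˣ))⁻¹ * (phiU hg (Multiplicative.toAdd b))⁻¹ := by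
            rw [mul_assoc _ _ (((σ : (ℤ_[p])ˣ))⁻¹), mul_inv_cancel, mul_one]
        _ = (phiU hg (Multiplicative.toAdd b) * ((τ : (ℤ_[p])ˣ)))
            * ((σ : (ℤ_[p])ˣ))⁻¹ * (phiU hg (Multiplicative.toAdd b))⁻¹ := by rw [h1]
        _ = ((τ : (ℤ_[p])ˣ)) * ((σ : (ℤ_[p])ˣ))⁻¹
            * (phiU hg (Multiplicative.toAdd b) * (phiU hg (Multiplicative.toAdd b))⁻¹) := by
            simp only [mul_comm, mul_left_comm, mul_assoc]
        _ = ((τ : (ℤ_[p])ˣ)) * ((σ : (ℤ_[p])ˣ))⁻¹ := by rw [mul_inv_cancel, mul_one]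
    have hρT : ((τ : (ℤ_[p])ˣ)) * ((σ : (ℤ_[p])ˣ))⁻¹ ∈ T := mul_mem τ.2 (inv_mem σ.2)
    have h3 : (((τ : (ℤ_[p])ˣ)) * ((σ : (ℤ_[p])ˣ))⁻¹) ^ (2*(p-1)) = 1 :=
      hTtor _ hρT
    have h4 : phiU hg (((2*(p-1) : ℕ) : ℤ_[p]) * (Multiplicative.toAdd a + -(Multiplicative.toAdd b))) = 1 := by
      rw [← phiU_pow hg, h2, h3]
    have h5 : ((2*(p-1) : ℕ) : ℤ_[p]) * (Multiplicative.toAdd a + -(Multiplicative.toAdd b)) = 0 := by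
      apply phiU_inj hg hg1
      rw [h4, phiU_zero hg]
    have h6 : Multiplicative.toAdd a + -(Multiplicative.toAdd b) = 0 := by
      rcases mul_eq_zero.mp h5 with h' | h'
      · exfalso
        have hne : (2*(p-1) : ℕ) ≠ 0 := by have := hp.out.two_le; omega
        exact (Nat.cast_ne_zero.mpr hne : ((2*(p-1):ℕ):ℤ_[p]) ≠ 0) h'
      · exact h'
    have hab : a = b := by
      have : Multiplicative.toAdd a = Multiplicative.toAdd b := by
        have := h6
        rwa [add_neg_eq_zero] at this
      exact this
    subst hab
    have hστ : σ = τ := by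
      apply Subtype.ext
      exact mul_left_cancel h1
    rw [hστ]
  have hsurj : Function.Surjective Ψf := by
    rintro ⟨h, hhH⟩
    obtain ⟨τ, hτT, hgood, hle⟩ := hcover h hhH
    obtain ⟨a, ha⟩ := phiU_surj hg hg1 (h * τ⁻¹) hle
    refine ⟨(Multiplicative.ofAdd a, ⟨τ, hτT⟩), ?_⟩
    apply Subtype.ext
    show phiU hg (Multiplicative.toAdd (Multiplicative.ofAdd a)) * τ = h
    rw [toAdd_ofAdd, ha, inv_mul_cancel_right]
  let ΨHom : Multiplicative ℤ_[p] × T →* H := MonoidHom.mk' Ψf Ψmul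
  let e' : (Multiplicative ℤ_[p] × T) ≃* H := MulEquiv.ofBijective ΨHom ⟨hinj, hsurj⟩
  -- continuity of the forward map
  have hcont : Continuous Ψf := by
    apply Continuous.subtype_mk
    apply Continuous.mul
    · exact (phiU_continuous hg).comp (continuous_toAdd.comp continuous_fst)
    · have : Continuous (fun τ : T => (τ : (ℤ_[p])ˣ)) := continuous_of_discreteTopology
      exact this.comp continuous_snd
  haveI : CompactSpace (Multiplicative ℤ_[p]) := inferInstanceAs (CompactSpace ℤ_[p])
  haveI : CompactSpace T := Finite.compactSpace
  refine ⟨T, inferInstance, hTfin, tΔ, hdisc, e'.symm, ?_, ?_⟩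
  · have hcont' : Continuous ⇑e'.toEquiv := hcont
    exact hcont'.continuous_symm_of_equiv_compact_to_t2
  · exact hcont

lemma good_unit_pow_sub_one_odd (hodd : p ≠ 2) (h : ℤ_[p]ˣ) :
    Good (((h^(p-1) : ℤ_[p]ˣ):ℤ_[p]) - 1) := by
  apply good_of_odd hodd
  apply norm_sub_one_mem_span
  rw [map_sub, map_one, Units.val_pow_eq_pow_val, map_pow]
  have hu : IsUnit (PadicInt.toZMod ((h:ℤ_[p]))) := (h.isUnit).map PadicInt.toZMod
  rw [ZMod.pow_card_sub_one_eq_one hu.ne_zero, sub_self]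

lemma pow_succ_split (k : ℕ) : p^(k+1) = p^k + p^k * (p-1) := by
  obtain ⟨d, hd⟩ := Nat.exists_eq_add_of_le hp.out.one_lt.le
  subst hd
  have : 1 + d - 1 = d := by omega
  rw [this, pow_succ]
  ring

lemma unit_pow_succ_split (h : ℤ_[p]ˣ) (k : ℕ) :
    h^(p^(k+1)) = h^(p^k) * (h^(p-1))^(p^k) := by
  rw [pow_succ_split, pow_add, ← pow_mul, mul_comm (p-1) (p^k)]

/-- Cauchyness of the Teichmüller sequence for odd `p`. -/
lemma tei_cauchy (hodd : p ≠ 2) (h : ℤ_[p]ˣ) :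
    CauchySeq (fun k => ((h^(p^k) : ℤ_[p]ˣ) : ℤ_[p])) := by
  apply cauchySeq_of_le_geometric ((p:ℝ)⁻¹) 1 pinv_lt_one
  intro k
  rw [dist_eq_norm]
  have hsplit := unit_pow_succ_split h k
  have : ((h^(p^k) : ℤ_[p]ˣ) : ℤ_[p]) - ((h^(p^(k+1)) : ℤ_[p]ˣ) : ℤ_[p])
      = ((h^(p^k) : ℤ_[p]ˣ) : ℤ_[p]) * (1 - (((h^(p-1))^(p^k) : ℤ_[p]ˣ) : ℤ_[p])) := by
    rw [hsplit, Units.val_mul]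
    ring
  rw [this, norm_mul, PadicInt.norm_units, one_mul, norm_sub_rev]
  have hkey := norm_unit_pow_sub_one (good_unit_pow_sub_one_odd hodd h) (p^k)
  rw [hkey]
  have hc : ((p^k : ℕ) : ℤ_[p]) = (p:ℤ_[p])^k := by push_cast; ring
  rw [hc, PadicInt.norm_p_pow, pow_neg_eq]
  calc ((p:ℝ)⁻¹)^k * ‖((h^(p-1) : ℤ_[p]ˣ) : ℤ_[p]) - 1‖ ≤ ((p:ℝ)⁻¹)^k * 1 :=
        mul_le_mul_of_nonneg_left (PadicInt.norm_le_one _) (by positivity)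
    _ = 1 * ((p:ℝ)⁻¹)^k := by ring

/-- The Teichmüller limit. -/
noncomputable def tei (h : ℤ_[p]ˣ) : ℤ_[p] :=
  limUnder atTop (fun k => ((h^(p^k) : ℤ_[p]ˣ) : ℤ_[p]))

lemma tendsto_tei (hodd : p ≠ 2) (h : ℤ_[p]ˣ) :
    Tendsto (fun k => ((h^(p^k) : ℤ_[p]ˣ) : ℤ_[p])) atTop (𝓝 (tei h)) :=
  (tei_cauchy hodd h).tendsto_limUnder

lemma tei_mul_tei_inv (hodd : p ≠ 2) (h : ℤ_[p]ˣ) : tei h * tei h⁻¹ = 1 := by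
  have h1 := (tendsto_tei hodd h).mul (tendsto_tei hodd h⁻¹)
  apply tendsto_nhds_unique _ h1 |>.symm
  have heq : ∀ k:ℕ, ((h^(p^k) : ℤ_[p]ˣ) : ℤ_[p]) * (((h⁻¹)^(p^k) : ℤ_[p]ˣ) : ℤ_[p]) = 1 := by
    intro k
    rw [← Units.val_mul, ← mul_pow, mul_inv_cancel, one_pow, Units.val_one]
  simp only [heq]
  exact tendsto_const_nhds

/-- Teichmüller lift as a unit. -/
noncomputable def teiU (hodd : p ≠ 2) (h : ℤ_[p]ˣ) : ℤ_[p]ˣ :=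
  Units.mkOfMulEqOne (tei h) (tei h⁻¹) (tei_mul_tei_inv hodd h)

@[simp] lemma teiU_val (hodd : p ≠ 2) (h : ℤ_[p]ˣ) : ((teiU hodd h : ℤ_[p]ˣ) : ℤ_[p]) = tei h := rfl

@[simp] lemma teiU_inv_val (hodd : p ≠ 2) (h : ℤ_[p]ˣ) :
    (((teiU hodd h)⁻¹ : ℤ_[p]ˣ) : ℤ_[p]) = tei h⁻¹ := rfl

lemma tendsto_teiU (hodd : p ≠ 2) (h : ℤ_[p]ˣ) :
    Tendsto (fun k => h^(p^k)) atTop (𝓝 (teiU hodd h)) := by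
  rw [Units.isEmbedding_embedProduct.isInducing.tendsto_nhds_iff]
  refine Filter.Tendsto.prodMk_nhds (tendsto_tei hodd h) ?_
  apply ((MulOpposite.continuous_op).tendsto _).comp
  show Tendsto (fun k => (((h^(p^k))⁻¹ : ℤ_[p]ˣ) : ℤ_[p])) atTop (𝓝 (tei h⁻¹))
  have := tendsto_tei hodd h⁻¹
  simpa only [inv_pow] using this

lemma teiU_mem (hodd : p ≠ 2) {H : Subgroup (ℤ_[p])ˣ} (hclosed : IsClosed (H : Set (ℤ_[p])ˣ))
    {h : ℤ_[p]ˣ} (hh : h ∈ H) : teiU hodd h ∈ H :=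
  hclosed.mem_of_tendsto (tendsto_teiU hodd h)
    (Filter.Eventually.of_forall (fun k => pow_mem hh _))

lemma teiU_pow_eq_one (hodd : p ≠ 2) (h : ℤ_[p]ˣ) : (teiU hodd h)^(p-1) = 1 := by
  apply Units.ext
  rw [Units.val_pow_eq_pow_val, teiU_val, Units.val_one]
  have h1 : Tendsto (fun k => (((h^(p^k)) : ℤ_[p]ˣ) : ℤ_[p])^(p-1)) atTop (𝓝 ((tei h)^(p-1))) :=
    (tendsto_tei hodd h).pow (p-1)
  apply tendsto_nhds_unique h1
  have heq : ∀ k:ℕ, (((h^(p^k)) : ℤ_[p]ˣ) : ℤ_[p])^(p-1) = (((h^(p-1))^(p^k) : ℤ_[p]ˣ) : ℤ_[p]) := by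
    intro k
    rw [← Units.val_pow_eq_pow_val, ← pow_mul, ← pow_mul, mul_comm]
  simp only [heq]
  rw [tendsto_iff_norm_sub_tendsto_zero]
  have hb : ∀ k:ℕ, ‖(((h^(p-1))^(p^k) : ℤ_[p]ˣ) : ℤ_[p]) - 1‖ ≤ ((p:ℝ)⁻¹)^k := by
    intro k
    rw [norm_unit_pow_sub_one (good_unit_pow_sub_one_odd hodd h) (p^k)]
    have hc : ((p^k : ℕ) : ℤ_[p]) = (p:ℤ_[p])^k := by push_cast; ring
    rw [hc, PadicInt.norm_p_pow, pow_neg_eq]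
    calc ((p:ℝ)⁻¹)^k * ‖((h^(p-1) : ℤ_[p]ˣ) : ℤ_[p]) - 1‖ ≤ ((p:ℝ)⁻¹)^k * 1 :=
          mul_le_mul_of_nonneg_left (PadicInt.norm_le_one _) (by positivity)
      _ = ((p:ℝ)⁻¹)^k := by ring
  apply squeeze_zero_norm (fun k => (norm_norm _).le.trans (hb k))
    (tendsto_pow_atTop_nhds_zero_of_lt_one (pinv_pos (p := p)).le (pinv_lt_one (p := p)))

lemma teiU_tor (hodd : p ≠ 2) (h : ℤ_[p]ˣ) : (teiU hodd h)^(2*(p-1)) = 1 := by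
  rw [mul_comm 2 (p-1), pow_mul, teiU_pow_eq_one hodd h, one_pow]

lemma good_mul_teiU_inv (hodd : p ≠ 2) (h : ℤ_[p]ˣ) :
    Good (((h * (teiU hodd h)⁻¹ : ℤ_[p]ˣ) : ℤ_[p]) - 1) := by
  apply good_of_odd hodd
  have hval : ((h * (teiU hodd h)⁻¹ : ℤ_[p]ˣ) : ℤ_[p]) = (h:ℤ_[p]) * tei h⁻¹ := by
    rw [Units.val_mul, teiU_inv_val]
  rw [hval]
  -- limit of h * (h⁻¹)^(p^k)
  have h1 : Tendsto (fun k => (h:ℤ_[p]) * (((h⁻¹)^(p^k) : ℤ_[p]ˣ) : ℤ_[p]))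
      atTop (𝓝 ((h:ℤ_[p]) * tei h⁻¹)) := (tendsto_tei hodd h⁻¹).const_mul _
  have h2 : Tendsto (fun k => ‖(h:ℤ_[p]) * (((h⁻¹)^(p^k) : ℤ_[p]ˣ) : ℤ_[p]) - 1‖)
      atTop (𝓝 ‖(h:ℤ_[p]) * tei h⁻¹ - 1‖) := ((h1.sub tendsto_const_nhds).norm)
  apply le_of_tendsto h2
  apply Filter.Eventually.of_forall
  intro k
  -- ‖h * (h⁻¹)^(p^k) - 1‖ ≤ p⁻¹
  have hd : (p-1) ∣ (p^k - 1) := by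
    have := Nat.sub_dvd_pow_sub_pow p 1 k
    simpa using this
  obtain ⟨m, hm⟩ := hd
  have hsp : h^(p^k) = h * (h^(p-1))^m := by
    rw [← pow_mul, ← pow_succ']
    congr 1
    have hp1 : 1 ≤ p^k := Nat.one_le_iff_ne_zero.mpr (pow_ne_zero k hp.out.ne_zero)
    omega
  have hval2 : (h:ℤ_[p]) * (((h⁻¹)^(p^k) : ℤ_[p]ˣ) : ℤ_[p]) - 1
      = (((h^(p^k) : ℤ_[p]ˣ) : ℤ_[p]) - (h:ℤ_[p])) * (-(((h⁻¹)^(p^k) : ℤ_[p]ˣ) : ℤ_[p])) := by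
    have hinv : ((h^(p^k) : ℤ_[p]ˣ) : ℤ_[p]) * (((h⁻¹)^(p^k) : ℤ_[p]ˣ) : ℤ_[p]) = 1 := by
      rw [← Units.val_mul, ← mul_pow, mul_inv_cancel, one_pow, Units.val_one]
    calc (h:ℤ_[p]) * (((h⁻¹)^(p^k) : ℤ_[p]ˣ) : ℤ_[p]) - 1
        = (h:ℤ_[p]) * (((h⁻¹)^(p^k) : ℤ_[p]ˣ) : ℤ_[p])
          - ((h^(p^k) : ℤ_[p]ˣ) : ℤ_[p]) * (((h⁻¹)^(p^k) : ℤ_[p]ˣ) : ℤ_[p]) := by rw [hinv]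
      _ = _ := by ring
  rw [hval2, norm_mul, norm_neg, PadicInt.norm_units, mul_one]
  -- ‖h^(p^k) - h‖ = ‖(h^(p-1))^m - 1‖ ≤ p⁻¹
  have hval3 : ((h^(p^k) : ℤ_[p]ˣ) : ℤ_[p]) - (h:ℤ_[p])
      = (h:ℤ_[p]) * ((((h^(p-1))^m : ℤ_[p]ˣ) : ℤ_[p]) - 1) := by
    rw [hsp, Units.val_mul]
    ring
  rw [hval3, norm_mul, PadicInt.norm_units, one_mul,
    norm_unit_pow_sub_one (good_unit_pow_sub_one_odd hodd h) m]
  calc ‖((m:ℕ):ℤ_[p])‖ * ‖((h^(p-1) : ℤ_[p]ˣ) : ℤ_[p]) - 1‖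
      ≤ 1 * ‖((h^(p-1) : ℤ_[p]ˣ) : ℤ_[p]) - 1‖ :=
        mul_le_mul_of_nonneg_right (PadicInt.norm_le_one _) (norm_nonneg _)
    _ = ‖((h^(p-1) : ℤ_[p]ˣ) : ℤ_[p]) - 1‖ := one_mul _
    _ ≤ (p:ℝ)⁻¹ := (good_unit_pow_sub_one_odd hodd h).1

/-- Finiteness of bounded-exponent subgroups. -/
lemma finite_torsion {n : ℕ} (hn : n ≠ 0) (T : Subgroup (ℤ_[p])ˣ)
    (hT : ∀ τ ∈ T, τ^n = 1) : Finite T := by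
  have hpoly : (Polynomial.X^n - Polynomial.C 1 : Polynomial ℤ_[p]) ≠ 0 :=
    Polynomial.X_pow_sub_C_ne_zero (Nat.pos_of_ne_zero hn) 1
  have hroots : {x : ℤ_[p] | (Polynomial.X^n - Polynomial.C 1 : Polynomial ℤ_[p]).IsRoot x}.Finite :=
    Polynomial.finite_setOf_isRoot hpoly
  haveI := hroots.to_subtype
  apply Finite.of_injective (fun τ : T =>
    (⟨((τ : (ℤ_[p])ˣ) : ℤ_[p]), by
      have h1 : ((τ : (ℤ_[p])ˣ))^n = 1 := hT _ τ.2
      have h2 : (((τ : (ℤ_[p])ˣ)) : ℤ_[p])^n = 1 := by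
        rw [← Units.val_pow_eq_pow_val, h1, Units.val_one]
      simp only [Set.mem_setOf_eq, Polynomial.IsRoot, Polynomial.eval_sub, Polynomial.eval_pow,
        Polynomial.eval_X, Polynomial.eval_C, h2, sub_self]⟩ :
      {x : ℤ_[p] | (Polynomial.X^n - Polynomial.C 1 : Polynomial ℤ_[p]).IsRoot x}))
  intro τ₁ τ₂ heq
  have : (((τ₁ : (ℤ_[p])ˣ)) : ℤ_[p]) = (((τ₂ : (ℤ_[p])ˣ)) : ℤ_[p]) := congrArg Subtype.val heq
  exact Subtype.ext (Units.ext this)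

lemma mem_pow_ker {n : ℕ} {τ : (ℤ_[p])ˣ} (hτ : τ ∈ (powMonoidHom n : (ℤ_[p])ˣ →* (ℤ_[p])ˣ).ker) :
    τ^n = 1 := hτ

/-- The statement we prove for a given subgroup. -/
def Concl (H : Subgroup (ℤ_[p])ˣ) : Prop :=
  ∃ (Δ : Type) (_ : Group Δ) (_ : Finite Δ) (_ : TopologicalSpace Δ) (_ : DiscreteTopology Δ),
    ∃ e : H ≃* Multiplicative ℤ_[p] × Δ, Continuous e ∧ Continuous e.symm

lemma main_odd (hodd : p ≠ 2) (H : Subgroup (ℤ_[p])ˣ) (hclosed : IsClosed (H : Set (ℤ_[p])ˣ))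
    (hinf : Infinite H) : Concl H := by
  obtain ⟨g, hgH, hg1, hg, hmax⟩ := exists_max_good hinf
  have hn0 : (2*(p-1)) ≠ 0 := by have := hp.out.two_le; omega
  refine assembly H hclosed g hgH hg1 hg
    (H ⊓ (powMonoidHom (2*(p-1)) : (ℤ_[p])ˣ →* (ℤ_[p])ˣ).ker) inf_le_left
    (finite_torsion hn0 _ (fun τ hτ => mem_pow_ker hτ.2)) (fun τ hτ => mem_pow_ker hτ.2) ?_
  intro h hhH
  have hmem := teiU_mem hodd hclosed hhH
  refine ⟨teiU hodd h, ⟨hmem, teiU_tor hodd h⟩, good_mul_teiU_inv hodd h, ?_⟩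
  exact hmax _ (mul_mem hhH (inv_mem hmem)) (good_mul_teiU_inv hodd h)

lemma good_neg_of_not_good (hp2 : p = 2) (h : ℤ_[p]ˣ) (hbad : ¬ Good ((h:ℤ_[p]) - 1)) :
    Good (((-h : ℤ_[p]ˣ):ℤ_[p]) - 1) := by
  subst hp2
  -- 2 ∣ h - 1
  obtain ⟨w, hw⟩ : (2:ℤ_[2]) ∣ ((h:ℤ_[2]) - 1) := by
    have h0 : PadicInt.toZMod ((h:ℤ_[2]) - 1) = 0 := by
      rw [map_sub, map_one]
      have hu : IsUnit (PadicInt.toZMod ((h:ℤ_[2]))) := (h.isUnit).map PadicInt.toZMod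
      rw [zmod_two_ne_zero_eq_one _ hu.ne_zero, sub_self]
    have hmem : ((h:ℤ_[2]) - 1) ∈ Ideal.span {(2:ℤ_[2])} := by
      rw [show ((2:ℤ_[2])) = ((2:ℕ):ℤ_[2]) by push_cast; ring, ← PadicInt.maximalIdeal_eq_span_p,
        ← PadicInt.ker_toZMod]
      exact h0
    rwa [Ideal.mem_span_singleton] at hmem
  have hwu : ‖w‖ = 1 := by
    by_contra hne
    have hlt : ‖w‖ < 1 := lt_of_le_of_ne (PadicInt.norm_le_one w) hne
    have h2 : ‖w‖ ≤ ((2:ℕ):ℝ)⁻¹ := by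
      have : (2:ℤ_[2]) ∣ w := by
        have hdvd : ((2:ℕ):ℤ_[2]) ∣ w := (PadicInt.norm_lt_one_iff_dvd w).mp hlt
        simpa using hdvd
      obtain ⟨w', hw'⟩ := this
      rw [hw', norm_mul]
      calc ‖(2:ℤ_[2])‖ * ‖w'‖ ≤ ‖(2:ℤ_[2])‖ * 1 :=
            mul_le_mul_of_nonneg_left (PadicInt.norm_le_one _) (norm_nonneg _)
        _ = ((2:ℕ):ℝ)⁻¹ := by
            rw [mul_one, show ((2:ℤ_[2])) = ((2:ℕ):ℤ_[2]) by push_cast; ring, PadicInt.norm_p]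
    apply hbad
    apply good_of_le_sq
    rw [hw, norm_mul, show ((2:ℤ_[2])) = ((2:ℕ):ℤ_[2]) by push_cast; ring,
      PadicInt.norm_p, sq]
    exact mul_le_mul_of_nonneg_left h2 (by positivity)
  -- w is a unit hence w + 1 ≡ 0 mod 2
  have hw1 : ‖w + 1‖ ≤ ((2:ℕ):ℝ)⁻¹ := by
    have hu : IsUnit w := PadicInt.isUnit_iff.mpr hwu
    have h0 : PadicInt.toZMod (w + 1) = 0 := by
      rw [map_add, map_one, zmod_two_ne_zero_eq_one _ (hu.map PadicInt.toZMod).ne_zero]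
      rfl
    exact norm_sub_one_mem_span h0
  apply good_of_le_sq
  have hval : ((-h : ℤ_[2]ˣ):ℤ_[2]) - 1 = -(2 * (w + 1)) := by
    rw [Units.val_neg]
    have : (h:ℤ_[2]) = 1 + 2*w := by rw [← hw]; ring
    rw [this]; ring
  rw [hval, norm_neg, norm_mul, show ((2:ℤ_[2])) = ((2:ℕ):ℤ_[2]) by push_cast; ring,
    PadicInt.norm_p, sq]
  exact mul_le_mul_of_nonneg_left hw1 (by positivity)

lemma main_two_neg (hp2 : p = 2) (H : Subgroup (ℤ_[p])ˣ) (hclosed : IsClosed (H : Set (ℤ_[p])ˣ))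
    (hinf : Infinite H) (hneg : (-1 : (ℤ_[p])ˣ) ∈ H) : Concl H := by
  obtain ⟨g, hgH, hg1, hg, hmax⟩ := exists_max_good hinf
  have hn0 : (2*(p-1)) ≠ 0 := by have := hp.out.two_le; omega
  have h22 : 2*(p-1) = 2 := by omega
  refine assembly H hclosed g hgH hg1 hg
    (H ⊓ (powMonoidHom (2*(p-1)) : (ℤ_[p])ˣ →* (ℤ_[p])ˣ).ker) inf_le_left
    (finite_torsion hn0 _ (fun τ hτ => mem_pow_ker hτ.2)) (fun τ hτ => mem_pow_ker hτ.2) ?_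
  intro h hhH
  by_cases hgood : Good ((h:ℤ_[p]) - 1)
  · refine ⟨1, ⟨one_mem H, one_mem _⟩, ?_, ?_⟩
    · rw [inv_one, mul_one]; exact hgood
    · rw [inv_one, mul_one]; exact hmax _ hhH hgood
  · have hm1 : ((-1 : (ℤ_[p])ˣ))⁻¹ = -1 := by
      apply (eq_inv_of_mul_eq_one_right ?_).symm
      apply Units.ext
      simp
    have hker : (-1 : (ℤ_[p])ˣ) ∈ (powMonoidHom (2*(p-1)) : (ℤ_[p])ˣ →* (ℤ_[p])ˣ).ker := by
      show (-1 : (ℤ_[p])ˣ)^(2*(p-1)) = 1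
      rw [h22]
      apply Units.ext
      simp
    have hval : h * ((-1 : (ℤ_[p])ˣ))⁻¹ = -h := by
      rw [hm1, mul_neg_one]
    refine ⟨-1, ⟨hneg, hker⟩, ?_, ?_⟩
    · rw [hval]; exact good_neg_of_not_good hp2 h hgood
    · rw [hval]
      have : (-h : (ℤ_[p])ˣ) ∈ H := by
        rw [← hval]; exact mul_mem hhH (inv_mem hneg)
      exact hmax _ this (good_neg_of_not_good hp2 h hgood)

lemma main_two_sq (hp2 : p = 2) (H : Subgroup (ℤ_[p])ˣ) (hclosed : IsClosed (H : Set (ℤ_[p])ˣ))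
    (hinf : Infinite H) (hneg : (-1 : (ℤ_[p])ˣ) ∉ H) : Concl H := by
  classical
  set H2 : Subgroup (ℤ_[p])ˣ := Subgroup.map (powMonoidHom 2) H with hH2
  have hcompH : IsCompact (H : Set (ℤ_[p])ˣ) := hclosed.isCompact
  have hH2closed : IsClosed (H2 : Set (ℤ_[p])ˣ) := by
    have hH2set : (H2 : Set (ℤ_[p])ˣ) = (fun u => u^2) '' (H : Set (ℤ_[p])ˣ) := by
      rw [hH2, Subgroup.coe_map]; rfl
    rw [hH2set]
    exact (hcompH.image (continuous_pow 2)).isClosed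
  have hsqinj : ∀ a b : (ℤ_[p])ˣ, a ∈ H → b ∈ H → a^2 = b^2 → a = b := by
    intro a b ha hb hab
    have h1 : (a * b⁻¹)^2 = 1 := by
      rw [mul_pow, hab, ← mul_pow, mul_inv_cancel, one_pow]
    have h2 : ((a*b⁻¹ : (ℤ_[p])ˣ) : ℤ_[p]) * ((a*b⁻¹ : (ℤ_[p])ˣ) : ℤ_[p]) = 1 := by
      rw [← Units.val_mul, ← sq, h1, Units.val_one]
    rcases mul_self_eq_one_iff.mp h2 with h3 | h3
    · have : a * b⁻¹ = 1 := Units.ext h3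
      calc a = a * b⁻¹ * b := by rw [inv_mul_cancel_right]
        _ = 1 * b := by rw [this]
        _ = b := one_mul b
    · exfalso
      apply hneg
      have : a * b⁻¹ = -1 := Units.ext (by rw [h3, Units.val_neg, Units.val_one])
      rw [← this]
      exact mul_mem ha (inv_mem hb)
  haveI hH2inf : Infinite H2 := by
    apply Infinite.of_injective
      (fun h : H => (⟨((h:(ℤ_[p])ˣ))^2, Subgroup.mem_map_of_mem _ h.2⟩ : H2))
    intro a b hab
    have := congrArg Subtype.val hab
    exact Subtype.ext (hsqinj _ _ a.2 b.2 this)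
  obtain ⟨g, hgH, hg1, hg, hmax⟩ := exists_max_good hH2inf
  have hres : Concl H2 := by
    refine assembly H2 hH2closed g hgH hg1 hg ⊥ bot_le (finite_torsion one_ne_zero _
      (fun τ hτ => by rw [Subgroup.mem_bot] at hτ; rw [hτ, one_pow]))
      (fun τ hτ => by rw [Subgroup.mem_bot] at hτ; rw [hτ, one_pow]) ?_
    intro h hhH2
    obtain ⟨k, hkH, hk⟩ := Subgroup.mem_map.mp hhH2
    have hgoodh : Good ((h:ℤ_[p]) - 1) := by
      rw [← hk]
      exact good_of_le_sq (norm_unit_sq_sub_one_two hp2 k)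
    refine ⟨1, one_mem _, ?_, ?_⟩
    · rw [inv_one, mul_one]; exact hgoodh
    · rw [inv_one, mul_one]; exact hmax _ hhH2 hgoodh
  obtain ⟨Δ, iG, iF, iT, iD, e₂, he₂, he₂'⟩ := hres
  have hθmem : ∀ h : H, ((h:(ℤ_[p])ˣ))^2 ∈ H2 := fun h => Subgroup.mem_map_of_mem _ h.2
  let θf : H → H2 := fun h => ⟨((h:(ℤ_[p])ˣ))^2, hθmem h⟩
  have θmul : ∀ a b : H, θf (a*b) = θf a * θf b := by
    intro a b
    apply Subtype.ext
    show (((a*b : H) : (ℤ_[p])ˣ))^2 = ((a:(ℤ_[p])ˣ))^2 * ((b:(ℤ_[p])ˣ))^2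
    rw [Subgroup.coe_mul, mul_pow]
  have θbij : Function.Bijective θf := by
    constructor
    · intro a b hab
      exact Subtype.ext (hsqinj _ _ a.2 b.2 (congrArg Subtype.val hab))
    · rintro ⟨h, hhH2⟩
      obtain ⟨k, hkH, hk⟩ := Subgroup.mem_map.mp hhH2
      exact ⟨⟨k, hkH⟩, Subtype.ext hk⟩
  let θ : H ≃* H2 := MulEquiv.ofBijective (MonoidHom.mk' θf θmul) θbij
  have hθcont : Continuous θf := by
    apply Continuous.subtype_mk
    exact (continuous_pow 2).comp continuous_subtype_val
  haveI : CompactSpace H := isCompact_iff_compactSpace.mp hcompH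
  refine ⟨Δ, iG, iF, iT, iD, θ.trans e₂, ?_, ?_⟩
  · have hcoe : ⇑(θ.trans e₂) = ⇑e₂ ∘ ⇑θ := rfl
    rw [hcoe]
    exact he₂.comp hθcont
  · have hcoe : ⇑(θ.trans e₂).symm = ⇑θ.symm ∘ ⇑e₂.symm := rfl
    rw [hcoe]
    apply Continuous.comp _ he₂'
    have hθc' : Continuous ⇑θ.toEquiv := hθcont
    exact hθc'.continuous_symm_of_equiv_compact_to_t2

end ZpAux

/-- Let `p` be a prime and `H` a closed subgroup of the unit group
`ℤ_p^×` of the ring of `p`-adic integers. If `H` is infinite, then there is a finite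
(discrete) group `Δ` such that `H` is isomorphic as a topological group to `ℤ_p × Δ`,
where `ℤ_p` carries its additive group structure and its profinite topology. -/
theorem closed_subgroup_of_padic_units_iso_Zp_times_finite
    (p : ℕ) [Fact p.Prime] (H : Subgroup (ℤ_[p])ˣ)
    (hclosed : IsClosed (H : Set (ℤ_[p])ˣ)) (hinf : Infinite H) :
    ∃ (Δ : Type) (_ : Group Δ) (_ : Finite Δ)
      (_ : TopologicalSpace Δ) (_ : DiscreteTopology Δ),
      ∃ e : H ≃* Multiplicative ℤ_[p] × Δ,
        Continuous e ∧ Continuous e.symm := by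
  by_cases hp2 : p = 2
  · by_cases hneg : (-1 : (ℤ_[p])ˣ) ∈ H
    · exact ZpAux.main_two_neg hp2 H hclosed hinf hneg
    · exact ZpAux.main_two_sq hp2 H hclosed hinf hneg
  · exact ZpAux.main_odd hp2 H hclosed hinf
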